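/- Let a maximal position on a path of length n ≥ 4 be given where instead of requiring the end edges to be directed, each end edge either is directed (giving an explicit signal) or is unmarkable with a forced implicit signal determined by its neighboring edge. Then the parity of the number of unmarkable edges on the path is determined by the pair of signals (explicit or implicit) exactly as in the explicit case: signals agreeing in direction along the path give even parity, disagreeing signals give odd parity. -/

import Mathlib

/-!
Along a legal position, adjacent directed edges point the same way, and maximality forces the two
neighbours of an interior unmarkable edge to point opposite ways.  Hence between two directed
edges the direction flips exactly once per unmarkable edge in between.  An implicit end signal
sits one unmarkable edge away from the directed secondary edge and is opposite to it, so it obeys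
the same rule, and comparing the two end signals counts every unmarkable edge of the path.
-/

/-- Legality of a position on a path with edges `1, …, n` (edge `i` joins `v_{i-1}` to `v_i`;
`some true` = directed toward `v_i`, `some false` = toward `v_{i-1}`, `none` = undirected);
no internal vertex `v_1, …, v_{n-1}` may be a sink or a source. -/
def PathLegal (n : ℕ) (pos : ℕ → Option Bool) : Prop :=
  ∀ i : ℕ, 1 ≤ i → i + 1 ≤ n →
    ¬(pos i = some true ∧ pos (i + 1) = some false) ∧
    ¬(pos i = some false ∧ pos (i + 1) = some true)

open Function

/-- Every undirected edge other than the end edges is unmarkable. -/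
def PathMaximal (n : ℕ) (pos : ℕ → Option Bool) : Prop :=
  ∀ i : ℕ, 2 ≤ i → i ≤ n - 1 → pos i = none → ∀ b : Bool, ¬ PathLegal n (update pos i (some b))

def undirectedCount (pos : ℕ → Option Bool) (i : ℕ) : ℕ :=
  ((Finset.Icc 1 i).filter fun j => pos j = none).card

section

variable {n : ℕ} {pos : ℕ → Option Bool}

theorem undirectedCount_zero : undirectedCount pos 0 = 0 := rfl

theorem undirectedCount_succ (i : ℕ) :
    undirectedCount pos (i + 1) = undirectedCount pos i + if pos (i + 1) = none then 1 else 0 := by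
  simp only [undirectedCount, Finset.card_filter]
  exact Finset.sum_Icc_succ_top (by omega) _

theorem undirectedCount_succ_of_some {i : ℕ} {b : Bool} (h : pos (i + 1) = some b) :
    undirectedCount pos (i + 1) = undirectedCount pos i := by
  simp [undirectedCount_succ, h]

theorem undirectedCount_succ_of_none {i : ℕ} (h : pos (i + 1) = none) :
    undirectedCount pos (i + 1) = undirectedCount pos i + 1 := by
  simp [undirectedCount_succ, h]

theorem PathLegal.eq_of_adjacent (h : PathLegal n pos) {i : ℕ} (hi : 1 ≤ i) (hin : i + 1 ≤ n)
    {a b : Bool} (ha : pos i = some a) (hb : pos (i + 1) = some b) : a = b := by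
  have := h i hi hin
  rw [ha, hb] at this
  cases a <;> cases b <;> simp_all

theorem PathLegal.update_some (h : PathLegal n pos) {i : ℕ} {b : Bool}
    (hprev : pos i ≠ some !b) (hnext : pos (i + 2) ≠ some !b) :
    PathLegal n (update pos (i + 1) (some b)) := by
  intro j hj hjn
  by_cases hji : j = i + 1
  · subst hji
    rw [update_self, update_of_ne (by omega)]
    cases b <;> simp_all
  by_cases hji' : j + 1 = i + 1
  · obtain rfl : j = i := by omega
    rw [update_self, update_of_ne hji]
    cases b <;> simp_all
  rw [update_of_ne hji, update_of_ne hji']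
  exact h j hj hjn

theorem PathMaximal.eq_some_not (hmax : PathMaximal n pos) (hlegal : PathLegal n pos) {i : ℕ}
    (hi : 1 ≤ i) (hin : i + 2 ≤ n) (hnone : pos (i + 1) = none) {b : Bool}
    (hb : pos (i + 2) = some b) : pos i = some !b := by
  by_contra hprev
  exact hmax (i + 1) (by omega) (by omega) hnone b (hlegal.update_some hprev (by simp [hb]))

theorem PathMaximal.eq_iff_even_add (hmax : PathMaximal n pos) (hlegal : PathLegal n pos)
    {i j : ℕ} (hi : 1 ≤ i) (hij : i ≤ j) (hjn : j ≤ n) {a b : Bool}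
    (ha : pos i = some a) (hb : pos j = some b) :
    a = b ↔ Even (undirectedCount pos i + undirectedCount pos j) := by
  induction j using Nat.strong_induction_on generalizing b with
  | _ j ih =>
    obtain rfl | hij := hij.eq_or_lt
    · rw [ha] at hb
      simp [Option.some.inj hb]
    obtain ⟨k, rfl⟩ : ∃ k, j = k + 1 := ⟨j - 1, by omega⟩
    rcases hk : pos k with _ | c
    · have hki : k ≠ i := by rintro rfl; simp_all
      obtain ⟨m, rfl⟩ : ∃ m, k = m + 1 := ⟨k - 1, by omega⟩
      have hm : pos m = some !b := hmax.eq_some_not hlegal (by omega) hjn hk hb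
      rw [undirectedCount_succ_of_some hb, undirectedCount_succ_of_none hk, ← add_assoc,
        Nat.even_add_one, ← ih m (by omega) (by omega) (by omega) hm]
      cases a <;> cases b <;> simp
    · rw [← hlegal.eq_of_adjacent (by omega) hjn hk hb, undirectedCount_succ_of_some hb]
      exact ih k (by omega) (by omega) (by omega) hk

theorem exists_left_signal {s : Bool} (h : pos 1 = some s ∨ (pos 1 = none ∧ pos 2 = some !s)) :
    ∃ k a, 1 ≤ k ∧ k ≤ 2 ∧ pos k = some a ∧ (a = s ↔ Even (undirectedCount pos k)) := by
  rcases h with h1 | ⟨h1, h2⟩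
  · refine ⟨1, s, le_rfl, by omega, h1, ?_⟩
    simp [undirectedCount_succ_of_some h1, undirectedCount_zero]
  · refine ⟨2, !s, by omega, le_rfl, h2, ?_⟩
    simp [undirectedCount_succ_of_some h2, undirectedCount_succ_of_none h1, undirectedCount_zero]

theorem exists_right_signal (hn : 1 ≤ n) {s : Bool}
    (h : pos n = some s ∨ (pos n = none ∧ pos (n - 1) = some !s)) :
    ∃ m b, n - 1 ≤ m ∧ m ≤ n ∧ pos m = some b ∧
      (b = s ↔ Even (undirectedCount pos m + undirectedCount pos n)) := by
  rcases h with h1 | ⟨h1, h2⟩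
  · exact ⟨n, s, by omega, le_rfl, h1, by simp⟩
  · refine ⟨n - 1, !s, le_rfl, by omega, h2, ?_⟩
    obtain ⟨m, rfl⟩ : ∃ m, n = m + 1 := ⟨n - 1, by omega⟩
    simp [undirectedCount_succ_of_none h1, ← add_assoc]

end

theorem Bool.eq_iff_even_of_chain {a b s t : Bool} {x y z : ℕ} (ha : a = s ↔ Even x)
    (hab : a = b ↔ Even (x + y)) (hb : b = t ↔ Even (y + z)) : s = t ↔ Even z := by
  simp only [Nat.even_add] at hab hb
  cases a <;> cases b <;> cases s <;> cases t <;>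
    simp [-Nat.not_even_iff_odd] at ha hab hb ⊢ <;> tauto

/-- Parity of unmarkable edges with explicit or implicit end signals, on a path with
`n ≥ 4` edges.  Each end edge is either directed (its direction along the path being its
explicit signal `s1`, resp. `sn`) or is unmarkable (`none`), in which case its implicit signal
is the unique direction it would have to receive to avoid a sink or source at the adjacent
internal vertex; since the adjacent secondary edge must then carry the opposite direction,
this is encoded by `pos 2 = some (!s1)` (resp. `pos (n-1) = some (!sn)`).  All interior
undirected edges are unmarkable (maximal position).  Then the total number of unmarkable
(undirected) edges is even iff the two signals agree: equal signals give even parity,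
unequal signals give odd parity. -/
theorem path_signal_parity (n : ℕ) (hn : 4 ≤ n) (pos : ℕ → Option Bool) (s1 sn : Bool)
    (hlegal : PathLegal n pos)
    (hleft : pos 1 = some s1 ∨ (pos 1 = none ∧ pos 2 = some (!s1)))
    (hright : pos n = some sn ∨ (pos n = none ∧ pos (n - 1) = some (!sn)))
    (hmax : ∀ i : ℕ, 2 ≤ i → i ≤ n - 1 → pos i = none →
      ∀ b : Bool, ¬ PathLegal n (Function.update pos i (some b))) :
    (s1 = sn → Even (((Finset.Icc 1 n).filter fun i => pos i = none).card)) ∧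
    (s1 ≠ sn → Odd (((Finset.Icc 1 n).filter fun i => pos i = none).card)) := by
  obtain ⟨k, a, hk1, hk2, ha, has⟩ := exists_left_signal hleft
  obtain ⟨m, b, hm1, hm2, hb, hbs⟩ := exists_right_signal (by omega) hright
  have hab := PathMaximal.eq_iff_even_add hmax hlegal hk1 (by omega) hm2 ha hb
  have key : s1 = sn ↔ Even (undirectedCount pos n) := Bool.eq_iff_even_of_chain has hab hbs
  exact ⟨key.mp, fun h => Nat.not_even_iff_odd.mp (mt key.mpr h)⟩
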